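/- Let T = cS, where c ∈ (Σ ∪ Π)∖{$} and S is a p-string of length n ≥ 1 ending with $, with $ occurring nowhere else in S, and let k_S = RA_S⁻¹[n]. If c ∈ Σ, then for every i ∈ {1,…,n}, F°_T[i] = F_S[i], and L°_T[i] = L_S[i] for all i ≠ k_S, while L°_T[k_S] = c. -/

import Mathlib

/-! Common framework: parameterized strings over static alphabet `σ` and
parameter alphabet `π`.  A p-string is a `List (σ ⊕ π)`. -/

variable {σ π : Type*}

instance instInhabSum [Inhabited σ] : Inhabited (σ ⊕ π) := ⟨Sum.inl default⟩

/-- one right rotation: the last character moves to the front -/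
def rotR1 {α : Type*} (W : List α) : List α := W.rotate (W.length - 1)

/-- `rotR W i` is the `i`-th right rotation `Rot(W, i)` -/
def rotR {α : Type*} (W : List α) : ℕ → List α
  | 0 => W
  | i + 1 => rotR1 (rotR W i)

/-- 1-based access `W[i]` (junk default outside the range) -/
def get1 {α : Type*} [Inhabited α] (W : List α) (i : ℕ) : α := W.getD (i - 1) default

/-- the prev-encoding `⟨T⟩`, a list over `σ ⊕ ℕ∞` -/
def prevEnc [DecidableEq σ] [DecidableEq π] (T : List (σ ⊕ π)) : List (σ ⊕ ℕ∞) :=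
  (List.range T.length).map fun k =>
    match T[k]? with
    | none => Sum.inr ⊤
    | some (Sum.inl a) => Sum.inl a
    | some (Sum.inr b) =>
      match ((List.range k).filter fun j => T[j]? = some (Sum.inr b)).max? with
      | none => Sum.inr ⊤
      | some j => Sum.inr ((k - j : ℕ) : ℕ∞)

/-- number of distinct parameter characters occurring in `W` -/
def distinctParams [DecidableEq π] (W : List (σ ⊕ π)) : ℕ :=
  (W.filterMap Sum.getRight?).dedup.length

/-- the encoding `⟦T⟧`, a list over `σ ⊕ ℕ`:  a static character is kept; a
parameter character at (1-based) position `i` is replaced by the number of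
distinct parameter characters in `Rot(T, n-i)[1:ℓ]` where `ℓ` is the leftmost
occurrence position of `T[i]` in `Rot(T, n-i)`. -/
def encodeE [DecidableEq σ] [DecidableEq π] (T : List (σ ⊕ π)) : List (σ ⊕ ℕ) :=
  (List.range T.length).map fun k =>
    match T[k]? with
    | none => Sum.inr 0
    | some (Sum.inl a) => Sum.inl a
    | some (Sum.inr b) =>
      let R := rotR T (T.length - (k + 1))
      Sum.inr (distinctParams (R.take (R.idxOf (Sum.inr b) + 1)))

/-- order on prev-encoding characters: every static character is smaller than
every element of `ℕ∞` (and `ℕ∞` carries its usual order with `∞` on top) -/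
def pvlt [LT σ] : (σ ⊕ ℕ∞) → (σ ⊕ ℕ∞) → Prop
  | Sum.inl a, Sum.inl b => a < b
  | Sum.inl _, Sum.inr _ => True
  | Sum.inr _, Sum.inl _ => False
  | Sum.inr x, Sum.inr y => x < y

/-- `T` is a p-string of length ≥ 1 ending with the static character `d`,
which occurs nowhere else in `T`. -/
def EndsWith [DecidableEq σ] [DecidableEq π] (T : List (σ ⊕ π)) (d : σ) : Prop :=
  1 ≤ T.length ∧ T.getLast? = some (Sum.inl d) ∧ T.count (Sum.inl d) = 1

/-- `RA` represents the parameterized rotation array `RA_T` (0-based indices: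
`RA_T[i] = (RA ⟨i-1⟩).val + 1`): the prev-encodings of the rotations are listed
in strictly increasing lexicographic order. -/
def IsRA [LinearOrder σ] [DecidableEq π] (T : List (σ ⊕ π))
    (RA : Fin T.length ≃ Fin T.length) : Prop :=
  ∀ i j : Fin T.length, i < j →
    List.Lex pvlt (prevEnc (rotR T ((RA i).val + 1))) (prevEnc (rotR T ((RA j).val + 1)))

/-- `LF` represents the LF mapping: `LF_T(i) = j` iff `T_{RA_T[i]+1} = T_{RA_T[j]}`. -/
def IsLF [LinearOrder σ] [DecidableEq π] (T : List (σ ⊕ π))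
    (RA LF : Fin T.length ≃ Fin T.length) : Prop :=
  ∀ i : Fin T.length, rotR T ((RA i).val + 2) = rotR T ((RA (LF i)).val + 1)

/-- the pBWT array `L_T[i] = ⟦T_{RA_T[i]}⟧[n]` -/
def Larr [LinearOrder σ] [DecidableEq π] [Inhabited σ] (T : List (σ ⊕ π))
    (RA : Fin T.length ≃ Fin T.length) (i : Fin T.length) : σ ⊕ ℕ :=
  get1 (encodeE (rotR T ((RA i).val + 1))) T.length

/-- the array `F_T[i] = ⟦T_{RA_T[i]}⟧[1]` -/
def Farr [LinearOrder σ] [DecidableEq π] [Inhabited σ] (T : List (σ ⊕ π))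
    (RA : Fin T.length ≃ Fin T.length) (i : Fin T.length) : σ ⊕ ℕ :=
  get1 (encodeE (rotR T ((RA i).val + 1))) 1

/-- longest common prefix of two lists -/
def lcp {α : Type*} [DecidableEq α] : List α → List α → List α
  | a :: as, b :: bs => if a = b then a :: lcp as bs else []
  | _, _ => []

/-- `lcp∞(X, Y)`: the number of `∞`'s in the longest common prefix of `X` and `Y` -/
def lcpInf [DecidableEq σ] (X Y : List (σ ⊕ ℕ∞)) : ℕ :=
  (lcp X Y).count (Sum.inr ⊤)

/-- the `∞`-LCP array (1-based): `LCP∞_T[i] = lcp∞(⟨T_{RA_T[i]}⟩, ⟨T_{RA_T[i+1]}⟩)`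
for `1 ≤ i < n`, and `0` otherwise. -/
def LCPa [LinearOrder σ] [DecidableEq π] (T : List (σ ⊕ π))
    (RA : Fin T.length ≃ Fin T.length) (i : ℕ) : ℕ :=
  if h : 1 ≤ i ∧ i < T.length then
    lcpInf (prevEnc (rotR T ((RA ⟨i - 1, by omega⟩).val + 1)))
           (prevEnc (rotR T ((RA ⟨i, h.2⟩).val + 1)))
  else 0

/-- parameterized match: a bijection on `σ ⊕ π` fixing all static characters
renames `S` into `T` -/
def PMatch (S T : List (σ ⊕ π)) : Prop :=
  ∃ f : (σ ⊕ π) ≃ (σ ⊕ π), (∀ a : σ, f (Sum.inl a) = Sum.inl a) ∧ S.map f = T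

/-- leftmost (1-based) occurrence position of `c` in `W`, `0` if absent -/
def leftPos [DecidableEq σ] [DecidableEq π] (W : List (σ ⊕ π)) (c : σ ⊕ π) : ℕ :=
  if W.contains c then W.idxOf c + 1 else 0

/-- rightmost (1-based) occurrence position of `c` in `W`, `0` if absent -/
def rightPos [DecidableEq σ] [DecidableEq π] (W : List (σ ⊕ π)) (c : σ ⊕ π) : ℕ :=
  if W.contains c then W.length - W.reverse.idxOf c else 0

/-! Inserting a static character into a cyclic p-string neither changes the parameter characters
nor, for any parameter character, the parameters met before its next cyclic occurrence. Hence
every rotation of `aS` is encoded as the matching rotation of `S` with `a` spliced in where `a`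
sits; the first character of each rotation is unaffected, and so is the last one except in the
rotation `S a`, which ends with `a`. -/

-- Core derives `BEq` for `Sum` without the matching `LawfulBEq` instance.
instance Sum.instLawfulBEq {α β : Type*} [BEq α] [LawfulBEq α] [BEq β] [LawfulBEq β] :
    LawfulBEq (α ⊕ β) where
  eq_of_beq {x y} h := by
    cases x <;> cases y <;> first
      | exact absurd h Bool.false_ne_true
      | exact congrArg _ (eq_of_beq h)
  rfl {x} := by
    cases x with
    | inl a => exact (BEq.rfl : a == a)
    | inr b => exact (BEq.rfl : b == b)

section Rotation

variable {α : Type*}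

theorem rotR_eq_rotate (W : List α) {p : ℕ} (hp : p ≤ W.length) :
    rotR W p = W.rotate (W.length - p) := by
  induction p with
  | zero => simp [rotR]
  | succ p ih =>
    rw [rotR, ih (by omega), rotR1, List.length_rotate, List.rotate_rotate, ← List.rotate_mod W,
      show W.length - p + (W.length - 1) = W.length - (p + 1) + W.length by omega,
      Nat.add_mod_right, List.rotate_mod]

theorem rotR_eq_drop_append_take (W : List α) {p : ℕ} (hp : p ≤ W.length) :
    rotR W p = W.drop (W.length - p) ++ W.take (W.length - p) := by
  rw [rotR_eq_rotate W hp, List.rotate_eq_drop_append_take (by omega)]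

theorem rotR_cons (x : α) (S : List α) {p : ℕ} (hp : p ≤ S.length) :
    rotR (x :: S) p = S.drop (S.length - p) ++ x :: S.take (S.length - p) := by
  rw [rotR_eq_rotate _ (by simp only [List.length_cons]; omega),
    List.rotate_eq_drop_append_take (by simp only [List.length_cons]; omega),
    List.length_cons, show S.length + 1 - p = S.length - p + 1 by omega]
  rfl

theorem rotate_append_of_le_length (U V : List α) {m : ℕ} (hm : m ≤ U.length) :
    (U ++ V).rotate m = U.drop m ++ (V ++ U.take m) := by
  rw [List.rotate_eq_drop_append_take (by simp only [List.length_append]; omega),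
    List.drop_append_of_le_length hm, List.take_append_of_le_length hm, List.append_assoc]

theorem rotate_append_length_add (U V : List α) {m : ℕ} (hm : m ≤ V.length) :
    (U ++ V).rotate (U.length + m) = V.drop m ++ (U ++ V.take m) := by
  rw [← List.rotate_rotate, List.rotate_append_length_eq, rotate_append_of_le_length V U hm]

end Rotation

section Encoding

variable [DecidableEq σ] [DecidableEq π]

def paramRank (R : List (σ ⊕ π)) (b : π) : ℕ :=
  distinctParams (R.take (R.idxOf (Sum.inr b) + 1))

/-- What `encodeE` writes for the character `x`, when `R` is the rotation of the string
starting just after the position of `x`. -/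
def encodeChar (R : List (σ ⊕ π)) : σ ⊕ π → σ ⊕ ℕ :=
  Sum.elim Sum.inl fun b => Sum.inr (paramRank R b)

theorem length_encodeE (W : List (σ ⊕ π)) : (encodeE W).length = W.length := by
  simp [encodeE]

theorem getElem?_encodeE (W : List (σ ⊕ π)) (k : ℕ) :
    (encodeE W)[k]? = W[k]?.map (encodeChar (W.rotate (k + 1))) := by
  rcases lt_or_ge k W.length with hk | hk
  · have hrot : rotR W (W.length - (k + 1)) = W.rotate (k + 1) := by
      rw [rotR_eq_rotate W (by omega), Nat.sub_sub_self (by omega)]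
    rw [encodeE, List.getElem?_map, List.getElem?_range hk, Option.map_some,
      List.getElem?_eq_getElem hk, Option.map_some]
    cases W[k] <;> simp [encodeChar, paramRank, hrot]
  · simp [encodeE, hk]

theorem filterMap_getRight?_take_idxOf (L : List (σ ⊕ π)) (b : π) :
    (L.take (L.idxOf (Sum.inr b) + 1)).filterMap Sum.getRight? =
      (L.filterMap Sum.getRight?).take ((L.filterMap Sum.getRight?).idxOf b + 1) := by
  induction L with
  | nil => rfl
  | cons x L ih =>
    rcases x with c | b'
    · simp [List.filterMap_cons, ih]
    · by_cases h : b' = b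
      · subst h; simp
      · simp [h, ih]

theorem encodeChar_append_inl_cons (L₁ L₂ : List (σ ⊕ π)) (a : σ) :
    encodeChar (L₁ ++ Sum.inl a :: L₂) = encodeChar (L₁ ++ L₂) := by
  funext x
  cases x <;> simp [encodeChar, paramRank, distinctParams, filterMap_getRight?_take_idxOf,
    List.filterMap_cons]

theorem encodeE_append_inl_cons (U V : List (σ ⊕ π)) (a : σ) :
    encodeE (U ++ Sum.inl a :: V) = (encodeE (U ++ V)).insertIdx U.length (Sum.inl a) := by
  ext k : 1
  simp only [getElem?_encodeE, List.getElem?_insertIdx]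
  rcases lt_trichotomy k U.length with hk | rfl | hk
  · rw [if_pos hk, List.getElem?_append_left hk, List.getElem?_append_left hk,
      rotate_append_of_le_length _ _ hk, rotate_append_of_le_length _ _ hk, List.cons_append,
      encodeChar_append_inl_cons]
  · simp [encodeChar, length_encodeE]
  · obtain ⟨j, rfl⟩ : ∃ j, k = U.length + j + 1 := ⟨k - U.length - 1, by omega⟩
    rw [if_neg (by omega), if_neg (by omega), List.getElem?_append_right (by omega),
      List.getElem?_append_right (by omega), show U.length + j + 1 - U.length = j + 1 by omega,
      show U.length + j + 1 - 1 = U.length + j by omega, Nat.add_sub_cancel_left,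
      List.getElem?_cons_succ, Nat.add_assoc, Nat.add_assoc, Nat.add_assoc]
    rcases lt_or_ge j V.length with hj | hj
    · rw [rotate_append_length_add _ _ (by simp only [List.length_cons]; omega),
        rotate_append_length_add _ _ hj]
      simp only [List.drop_succ_cons, List.take_succ_cons, ← List.append_assoc,
        encodeChar_append_inl_cons]
    · simp [hj]

theorem encodeE_rotR_cons_inl (S : List (σ ⊕ π)) (a : σ) {p : ℕ} (hp : p ≤ S.length) :
    encodeE (rotR (Sum.inl a :: S) p) = (encodeE (rotR S p)).insertIdx p (Sum.inl a) := by
  rw [rotR_cons _ _ hp, encodeE_append_inl_cons, rotR_eq_drop_append_take S hp, List.length_drop,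
    Nat.sub_sub_self hp]

theorem length_encodeE_rotR (W : List (σ ⊕ π)) {p : ℕ} (hp : p ≤ W.length) :
    (encodeE (rotR W p)).length = W.length := by
  rw [length_encodeE, rotR_eq_rotate W hp, List.length_rotate]

end Encoding

theorem updateLF_static_general [LinearOrder σ] [DecidableEq π] [Inhabited σ]
    (S : List (σ ⊕ π))
    (a : σ)
    (RAS : Fin S.length ≃ Fin S.length)
    (kS : Fin S.length) (hkS : (RAS kS).val + 1 = S.length) :
    ∀ i : Fin S.length,
      get1 (encodeE (rotR (Sum.inl a :: S) ((RAS i).val + 1))) 1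
          = get1 (encodeE (rotR S ((RAS i).val + 1))) 1 ∧
      (i ≠ kS →
        get1 (encodeE (rotR (Sum.inl a :: S) ((RAS i).val + 1))) (S.length + 1)
          = get1 (encodeE (rotR S ((RAS i).val + 1))) S.length) ∧
      (i = kS →
        get1 (encodeE (rotR (Sum.inl a :: S) ((RAS i).val + 1))) (S.length + 1)
          = Sum.inl a) := by
  intro i
  have hp : (RAS i).val + 1 ≤ S.length := (RAS i).isLt
  simp only [get1, List.getD_eq_getElem?_getD, encodeE_rotR_cons_inl S a hp]
  refine ⟨?_, fun hne => ?_, fun heq => ?_⟩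
  · rw [List.getElem?_insertIdx_of_lt (by omega)]
  · have hlt : (RAS i).val + 1 < S.length := by
      refine lt_of_le_of_ne hp fun h => hne (RAS.injective (Fin.ext ?_))
      omega
    rw [List.getElem?_insertIdx_of_gt (by omega), Nat.add_sub_cancel]
  · subst heq
    rw [show S.length + 1 - 1 = (RAS i).val + 1 by omega, List.getElem?_insertIdx_self,
      if_pos (hp.trans (length_encodeE_rotR S hp).ge)]
    rfl

/-- Let `T = cS` with `c ∈ Σ ∖ {$}` and let `k_S = RA_S⁻¹[n]`.
Then `F°_T[i] = F_S[i]` for every `i`, `L°_T[i] = L_S[i]` for `i ≠ k_S`, and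
`L°_T[k_S] = c`, where `L°_T[i] = ⟦T_{RA_S[i]}⟧[n+1]` and `F°_T[i] = ⟦T_{RA_S[i]}⟧[1]`. -/
theorem updateLF_static [LinearOrder σ] [DecidableEq π] [Inhabited σ]
    (d : σ) (hd : ∀ a : σ, d ≤ a)
    (S : List (σ ⊕ π)) (hS : EndsWith S d)
    (a : σ) (ha : a ≠ d)
    (RAS : Fin S.length ≃ Fin S.length) (hRAS : IsRA S RAS)
    (kS : Fin S.length) (hkS : (RAS kS).val + 1 = S.length) :
    ∀ i : Fin S.length,
      get1 (encodeE (rotR (Sum.inl a :: S) ((RAS i).val + 1))) 1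
          = get1 (encodeE (rotR S ((RAS i).val + 1))) 1 ∧
      (i ≠ kS →
        get1 (encodeE (rotR (Sum.inl a :: S) ((RAS i).val + 1))) (S.length + 1)
          = get1 (encodeE (rotR S ((RAS i).val + 1))) S.length) ∧
      (i = kS →
        get1 (encodeE (rotR (Sum.inl a :: S) ((RAS i).val + 1))) (S.length + 1)
          = Sum.inl a) :=
  updateLF_static_general S a RAS kS hkS
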